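/- arXiv:2208.11838 — 4 statements merged into one kernel-verified Lean document; each statement's English description precedes it below -/
import Mathlib

section
/- Let M be a labelled Markov chain over alphabet Σ and let A and A' be task automata over Σ with L(A) = L(A'). Then the product Markov chains M⊗A and M⊗A' are observationally equivalent. -/
/-! Since the automaton is deterministic, the only automaton component of nonzero weight along a
state path `s₀ … s_τ` is the run of the automaton on the labels `L s₁ … L s_τ`. The observed
acceptance bit at time `t` is therefore membership of the word `L s₁ ⋯ L s_t` in the accepted
language, so the observation probabilities depend on the automaton only through its language. -/

open scoped Classical

/-- A labelled Markov chain over a finite state type `S` and alphabet `Alph`. -/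
structure LMC (S : Type) (Alph : Type) [Fintype S] where
  s0 : S
  P : S → S → ℝ
  P_nonneg : ∀ s s', 0 ≤ P s s'
  P_sum : ∀ s, ∑ s', P s s' = 1
  L : S → Alph

/-- A task automaton (DFA) over alphabet `Alph` with finite state set `Q`. -/
structure TA (Q : Type) (Alph : Type) [Fintype Q] where
  q0 : Q
  δ : Q → Alph → Q
  F : Q → Bool

/-- Transition function of the product Markov chain `M ⊗ A`. -/
noncomputable def prodP {S Alph Q : Type} [Fintype S] [Fintype Q]
    (M : LMC S Alph) (A : TA Q Alph) (x y : S × Q) : ℝ :=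
  if y.2 = A.δ x.2 (M.L y.1) then M.P x.1 y.1 else 0

/-- Probability of a finite observation sequence `o` in the product Markov chain `M ⊗ A`:
the sum over all hidden product-state sequences starting at `(s0, q0)` whose emissions
`Z (s, q) = (s, χ_F q)` match `o`, of the product of transition probabilities. -/
noncomputable def obsProb {S Alph Q : Type} [Fintype S] [Fintype Q]
    (M : LMC S Alph) (A : TA Q Alph) (n : ℕ) (o : Fin (n + 1) → S × Bool) : ℝ :=
  ∑ x : Fin (n + 1) → S × Q,
    (if x 0 = (M.s0, A.q0) ∧ (∀ t, ((x t).1, A.F (x t).2) = o t) then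
      ∏ t : Fin n, prodP M A (x t.castSucc) (x t.succ)
    else 0)

/-- Observational equivalence of two product Markov chains over the same `S` and `Alph`. -/
def ObsEquiv {S Alph Q₁ Q₂ : Type} [Fintype S] [Fintype Q₁] [Fintype Q₂]
    (M₁ : LMC S Alph) (A₁ : TA Q₁ Alph) (M₂ : LMC S Alph) (A₂ : TA Q₂ Alph) : Prop :=
  ∀ (n : ℕ) (o : Fin (n + 1) → S × Bool), obsProb M₁ A₁ n o = obsProb M₂ A₂ n o

/-- The language accepted by a task automaton: words `w` with `δ*(q0, w) ∈ F`. -/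
def taLang {Q Alph : Type} [Fintype Q] (A : TA Q Alph) : Set (List Alph) :=
  {w | A.F (w.foldl A.δ A.q0) = true}

def TA.run {Q Alph : Type} [Fintype Q] (A : TA Q Alph) {n : ℕ} (u : Fin n → Alph) (t : Fin (n + 1)) :
    Q :=
  ((List.ofFn u).take t).foldl A.δ A.q0

namespace TA

variable {Q Alph : Type} [Fintype Q] (A : TA Q Alph) {n : ℕ} (u : Fin n → Alph)

@[simp]
theorem run_zero : A.run u 0 = A.q0 := by
  simp [run]

theorem run_succ (t : Fin n) : A.run u t.succ = A.δ (A.run u t.castSucc) (u t) := by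
  simp [run, List.take_add_one]

theorem eq_run_iff (q : Fin (n + 1) → Q) :
    q = A.run u ↔ q 0 = A.q0 ∧ ∀ t : Fin n, q t.succ = A.δ (q t.castSucc) (u t) := by
  constructor
  · rintro rfl
    exact ⟨A.run_zero u, A.run_succ u⟩
  · rintro ⟨h_zero, h_succ⟩
    funext t
    induction t using Fin.induction with
    | zero => rw [h_zero, run_zero]
    | succ t ih => rw [h_succ, run_succ, ih]

theorem F_run_eq_of_taLang_eq {Q' : Type} [Fintype Q'] {A' : TA Q' Alph}
    (h : taLang A = taLang A') (t : Fin (n + 1)) : A.F (A.run u t) = A'.F (A'.run u t) :=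
  Bool.eq_iff_iff.mpr (Set.ext_iff.mp h ((List.ofFn u).take t))

end TA

section Product

variable {S Alph Q : Type} [Fintype S] [Fintype Q] (M : LMC S Alph) (A : TA Q Alph) {n : ℕ}

theorem prod_prodP (x : Fin (n + 1) → S × Q) :
    ∏ t : Fin n, prodP M A (x t.castSucc) (x t.succ) =
      if ∀ t : Fin n, (x t.succ).2 = A.δ (x t.castSucc).2 (M.L (x t.succ).1) then
        ∏ t : Fin n, M.P (x t.castSucc).1 (x t.succ).1
      else 0 := by
  split_ifs with h_run
  · exact Finset.prod_congr rfl fun t _ => if_pos (h_run t)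
  · obtain ⟨t, ht⟩ := not_forall.mp h_run
    exact Finset.prod_eq_zero (Finset.mem_univ t) (if_neg ht)

theorem obsProb_eq_sum_run (o : Fin (n + 1) → S × Bool) :
    obsProb M A n o = ∑ s : Fin (n + 1) → S,
      if s 0 = M.s0 ∧ ∀ t, (s t, A.F (A.run (fun t : Fin n => M.L (s t.succ)) t)) = o t then
        ∏ t : Fin n, M.P (s t.castSucc) (s t.succ)
      else 0 := by
  rw [obsProb, ← (Equiv.arrowProdEquivProdArrow _ (fun _ => S) (fun _ => Q)).symm.sum_comp,
    Fintype.sum_prod_type]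
  refine Finset.sum_congr rfl fun s _ => ?_
  set u : Fin n → Alph := fun t => M.L (s t.succ)
  have h_summand : ∀ q : Fin (n + 1) → Q,
      (if (s 0, q 0) = (M.s0, A.q0) ∧ ∀ t, (s t, A.F (q t)) = o t then
        ∏ t : Fin n, prodP M A (s t.castSucc, q t.castSucc) (s t.succ, q t.succ) else 0) =
      if q = A.run u then
        (if s 0 = M.s0 ∧ ∀ t, (s t, A.F (A.run u t)) = o t then
          ∏ t : Fin n, M.P (s t.castSucc) (s t.succ) else 0)
      else 0 := by
    intro q
    have h_prod := prod_prodP M A fun t => (s t, q t)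
    simp only at h_prod
    rw [h_prod]
    by_cases hq : q = A.run u
    · subst hq
      simp [u, TA.run_succ]
    · rw [if_neg hq]
      rw [A.eq_run_iff u, not_and] at hq
      by_cases hq0 : q 0 = A.q0
      · have h_steps : ¬∀ t : Fin n, q t.succ = A.δ (q t.castSucc) (M.L (s t.succ)) := hq hq0
        simp [h_steps]
      · simp [hq0]
  simp only [Equiv.arrowProdEquivProdArrow_symm_apply, h_summand, Finset.sum_ite_eq',
    Finset.mem_univ, if_true]

end Product

/-- If two task automata accept the same language, the corresponding product Markov
chains with any labelled Markov chain `M` are observationally equivalent. -/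
theorem obsEquiv_of_lang_eq {S Alph Q Q' : Type} [Fintype S] [Fintype Q] [Fintype Q']
    (M : LMC S Alph) (A : TA Q Alph) (A' : TA Q' Alph)
    (h : taLang A = taLang A') : ObsEquiv M A M A' := by
  intro n o
  simp only [obsProb_eq_sum_run, A.F_run_eq_of_taLang_eq _ h]
end

section
/- Let M be a labelled Markov chain over alphabet Σ and let A and A' be task automata over Σ. If for every attainable state trajectory σ₀, …, σₙ of M and every t ≤ n the word L(σ₁)⋯L(σ_t) belongs to L(A) if and only if it belongs to L(A'), then M⊗A and M⊗A' are observationally equivalent. -/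
open scoped Classical

/-- The word `L(σ₁) L(σ₂) ⋯ L(σₙ)` read by a state trajectory `σ₀, …, σₙ`. -/
def readWord {S Alph : Type} [Fintype S] (M : LMC S Alph) {n : ℕ}
    (σ : Fin (n + 1) → S) : List Alph :=
  List.ofFn fun i : Fin n => M.L (σ i.succ)

/-- Deterministic automaton walk: `qwalk A f k` is the state reached after reading
`f 1, f 2, …, f k`. -/
def qwalk {Q Alph : Type} [Fintype Q] (A : TA Q Alph) (f : ℕ → Alph) : ℕ → Q
  | 0 => A.q0
  | k + 1 => A.δ (qwalk A f k) (f (k + 1))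

lemma qwalk_foldl {S Alph Q : Type} [Fintype S] [Fintype Q] (M : LMC S Alph)
    (A : TA Q Alph) {n : ℕ} (σ : Fin (n + 1) → S) :
    ∀ t, t ≤ n →
      qwalk A (fun k => M.L (σ ⟨min k n, Nat.lt_succ_of_le (min_le_right k n)⟩)) t
        = ((readWord M σ).take t).foldl A.δ A.q0 := by
  intro t
  induction t with
  | zero => intro _; simp [qwalk, readWord]
  | succ t ih =>
    intro ht
    have htn : t < n := ht
    have hget : (readWord M σ)[t]? = some (M.L (σ (⟨t, htn⟩ : Fin n).succ)) := by
      rw [List.getElem?_eq_getElem (by simp [readWord]; omega)]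
      simp [readWord]
    rw [List.take_succ, hget, List.foldl_append]
    rw [← ih (le_of_lt htn)]
    show A.δ _ (M.L (σ ⟨min (t + 1) n, _⟩)) = _
    simp only [Option.toList_some, List.foldl_cons, List.foldl_nil]
    congr 2
    congr 1
    apply Fin.ext
    simp [min_eq_left ht]

/-- Closed form of `obsProb`: the only hidden sequence that can contribute is the
deterministic one following the automaton. -/
lemma obsProb_eq {S Alph Q : Type} [Fintype S] [Fintype Q] (M : LMC S Alph)
    (A : TA Q Alph) (n : ℕ) (o : Fin (n + 1) → S × Bool) :
    obsProb M A n o =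
      if (o 0).1 = M.s0 ∧
          (∀ t : Fin (n + 1),
            A.F (qwalk A (fun k =>
              M.L (o ⟨min k n, Nat.lt_succ_of_le (min_le_right k n)⟩).1) t.val) = (o t).2) then
        ∏ t : Fin n, M.P (o t.castSucc).1 (o t.succ).1
      else 0 := by
  classical
  set f : ℕ → Alph := fun k =>
    M.L (o ⟨min k n, Nat.lt_succ_of_le (min_le_right k n)⟩).1 with hf
  set x0 : Fin (n + 1) → S × Q := fun t => ((o t).1, qwalk A f t.val) with hx0
  have hfsucc : ∀ k, ∀ hk : k < n, f (k + 1) = M.L (o ⟨k + 1, Nat.succ_lt_succ hk⟩).1 := by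
    intro k hk
    simp only [hf]
    congr 2
    congr 1
    apply Fin.ext
    simp [min_eq_left (Nat.succ_le_of_lt hk)]
  have hq0 : ∀ t : Fin n, (x0 t.succ).2 = A.δ (x0 t.castSucc).2 (M.L (x0 t.succ).1) := by
    intro t
    show qwalk A f (t.val + 1) = A.δ (qwalk A f t.val) (M.L (o t.succ).1)
    rw [qwalk, hfsucc t.val t.isLt]
    congr 2
  rw [obsProb]
  rw [Finset.sum_eq_single_of_mem x0 (Finset.mem_univ _)]
  · by_cases hcond : (o 0).1 = M.s0 ∧
        (∀ t : Fin (n + 1), A.F (qwalk A f t.val) = (o t).2)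
    · rw [if_pos, if_pos hcond]
      · exact Finset.prod_congr rfl fun t _ => by rw [prodP, if_pos (hq0 t)]
      · refine ⟨?_, fun t => ?_⟩
        · show ((o 0).1, qwalk A f (0 : Fin (n + 1)).val) = (M.s0, A.q0)
          simp [hcond.1, qwalk]
        · show ((o t).1, A.F (qwalk A f t.val)) = o t
          rw [hcond.2 t]
    · rw [if_neg, if_neg hcond]
      intro hc
      refine hcond ⟨congrArg Prod.fst hc.1, fun t => congrArg Prod.snd (hc.2 t)⟩
  · intro b _ hb
    split_ifs with hc
    · by_contra hprod
      have hfac : ∀ t : Fin n, prodP M A (b t.castSucc) (b t.succ) ≠ 0 := by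
        intro t ht0
        exact hprod (Finset.prod_eq_zero (Finset.mem_univ t) ht0)
      have hδ : ∀ t : Fin n, (b t.succ).2 = A.δ (b t.castSucc).2 (M.L (b t.succ).1) := by
        intro t
        by_contra hh
        exact hfac t (by rw [prodP, if_neg hh])
      have h1 : ∀ t : Fin (n + 1), (b t).1 = (o t).1 :=
        fun t => congrArg Prod.fst (hc.2 t)
      have hq : ∀ k (hk : k < n + 1), (b ⟨k, hk⟩).2 = qwalk A f k := by
        intro k
        induction k with
        | zero =>
          intro hk
          have e0 : (⟨0, hk⟩ : Fin (n + 1)) = 0 := rfl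
          rw [e0]
          exact congrArg Prod.snd hc.1
        | succ k ih =>
          intro hk
          have hk' : k < n := by omega
          have e1 : (⟨k + 1, hk⟩ : Fin (n + 1)) = (⟨k, hk'⟩ : Fin n).succ := rfl
          have e2 : (⟨k, by omega⟩ : Fin (n + 1)) = (⟨k, hk'⟩ : Fin n).castSucc := rfl
          rw [e1, hδ ⟨k, hk'⟩, qwalk]
          rw [← e1, ← e2, ih (by omega), hfsucc k hk']
          congr 1
          rw [e1, h1]
      apply hb
      funext t
      have := hq t.val t.isLt
      exact Prod.ext (h1 t) this
    · rfl

/-- If `A` and `A'` agree (membership-wise) on every prefix of the word read by any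
attainable state trajectory of `M`, then `M ⊗ A` and `M ⊗ A'` are observationally
equivalent. -/
theorem obsEquiv_of_agree_on_attainable {S Alph Q Q' : Type}
    [Fintype S] [Fintype Q] [Fintype Q']
    (M : LMC S Alph) (A : TA Q Alph) (A' : TA Q' Alph)
    (h : ∀ (n : ℕ) (σ : Fin (n + 1) → S), σ 0 = M.s0 →
      (∀ t : Fin n, 0 < M.P (σ t.castSucc) (σ t.succ)) →
      ∀ t ≤ n, ((readWord M σ).take t ∈ taLang A ↔ (readWord M σ).take t ∈ taLang A')) :
    ObsEquiv M A M A' := by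
  intro n o
  rw [obsProb_eq, obsProb_eq]
  set σ : Fin (n + 1) → S := fun t => (o t).1 with hσ
  set f : ℕ → Alph := fun k =>
    M.L (o ⟨min k n, Nat.lt_succ_of_le (min_le_right k n)⟩).1 with hf
  by_cases hs : (o 0).1 = M.s0
  · by_cases hp : ∀ t : Fin n, 0 < M.P (o t.castSucc).1 (o t.succ).1
    · have key := h n σ hs hp
      have hFF : ∀ t : Fin (n + 1),
          A.F (qwalk A f t.val) = A'.F (qwalk A' f t.val) := by
        intro t
        have ht : t.val ≤ n := Nat.lt_succ_iff.mp t.isLt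
        have e1 := qwalk_foldl M A σ t.val ht
        have e2 := qwalk_foldl M A' σ t.val ht
        have hmem := key t.val ht
        simp only [taLang, Set.mem_setOf_eq] at hmem
        rw [show (fun k => M.L (σ ⟨min k n, Nat.lt_succ_of_le (min_le_right k n)⟩)) = f
          from rfl] at e1 e2
        rw [e1, e2]
        exact Bool.eq_iff_iff.mpr hmem
      have : ((o 0).1 = M.s0 ∧ ∀ t : Fin (n + 1), A.F (qwalk A f t.val) = (o t).2)
          ↔ ((o 0).1 = M.s0 ∧ ∀ t : Fin (n + 1), A'.F (qwalk A' f t.val) = (o t).2) := by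
        constructor <;> rintro ⟨h1, h2⟩ <;> refine ⟨h1, fun t => ?_⟩
        · rw [← hFF t]; exact h2 t
        · rw [hFF t]; exact h2 t
      by_cases hc : (o 0).1 = M.s0 ∧ ∀ t : Fin (n + 1), A.F (qwalk A f t.val) = (o t).2
      · rw [if_pos hc, if_pos (this.mp hc)]
      · rw [if_neg hc, if_neg (fun hc' => hc (this.mpr hc'))]
    · push_neg at hp
      obtain ⟨t, ht⟩ := hp
      have hz : M.P (o t.castSucc).1 (o t.succ).1 = 0 :=
        le_antisymm ht (M.P_nonneg _ _)
      have hprod : ∏ t : Fin n, M.P (o t.castSucc).1 (o t.succ).1 = 0 :=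
        Finset.prod_eq_zero (Finset.mem_univ t) hz
      rw [hprod]
      simp
  · rw [if_neg (fun hc => hs hc.1), if_neg (fun hc => hs hc.1)]
end

section
/- (Non-uniqueness of the TA underlying a product Markov chain) There exist a labelled Markov chain M over an alphabet Σ and task automata A and A' over Σ with L(A) ≠ L(A') such that the product Markov chains M⊗A and M⊗A' are observationally equivalent. -/
open scoped Classical

/-- Auxiliary: a one-state Markov chain labelled `false`. -/
noncomputable def myM : LMC Unit Bool where
  s0 := ()
  P _ _ := 1
  P_nonneg _ _ := zero_le_one
  P_sum _ := by simp
  L _ := false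

/-- Auxiliary: the trivial automaton accepting everything. -/
def myA : TA Unit Bool where
  q0 := ()
  δ _ _ := ()
  F _ := true

/-- Auxiliary: an automaton rejecting any word containing `true`. -/
def myA' : TA Bool Bool where
  q0 := false
  δ q a := a || q
  F q := !q

theorem myKey : ObsEquiv myM myA myM myA' := by
  intro n o
  unfold obsProb
  rw [Fintype.sum_eq_single (fun _ => ((), ())), Fintype.sum_eq_single (fun _ => ((), false))]
  · simp [myM, myA, myA', prodP]
  · intro x hx
    by_cases hc : x 0 = (myM.s0, myA'.q0) ∧ ∀ t, ((x t).1, myA'.F (x t).2) = o t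
    · rw [if_pos hc]
      by_contra hprod
      apply hx
      have hstep : ∀ t : Fin n, (x t.succ).2 = (x t.castSucc).2 := by
        intro t
        have h := (Finset.prod_ne_zero_iff.mp hprod) t (Finset.mem_univ t)
        by_contra hne
        apply h
        simp [prodP, myM, myA', hne]
      have hall : ∀ t : Fin (n+1), (x t).2 = false := by
        intro t
        induction t using Fin.induction with
        | zero => rw [hc.1]; rfl
        | succ i ih => rw [hstep i, ih]
      funext t
      exact Prod.ext (Subsingleton.elim _ _) (hall t)
    · rw [if_neg hc]
  · intro x hx
    by_cases hc : x 0 = (myM.s0, myA.q0) ∧ ∀ t, ((x t).1, myA.F (x t).2) = o t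
    · exact absurd (funext fun t => Subsingleton.elim _ _) hx
    · rw [if_neg hc]

/-- Non-uniqueness of the task automaton underlying a product Markov chain: there exist
a labelled Markov chain `M` and task automata `A`, `A'` with different languages whose
products with `M` are observationally equivalent. -/

theorem ta_nonunique :
    ∃ (S Alph Q Q' : Type) (iS : Fintype S) (iQ : Fintype Q) (iQ' : Fintype Q')
      (M : @LMC S Alph iS) (A : @TA Q Alph iQ) (A' : @TA Q' Alph iQ'),
      @taLang Q Alph iQ A ≠ @taLang Q' Alph iQ' A' ∧
      @ObsEquiv S Alph Q Q' iS iQ iQ' M A M A' := by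
  refine ⟨Unit, Bool, Unit, Bool, inferInstance, inferInstance, inferInstance,
    myM, myA, myA', ?_, myKey⟩
  intro h
  have h1 : ([true] : List Bool) ∈ taLang myA := by simp [taLang, myA]
  rw [h] at h1
  simp [taLang, myA'] at h1
end

section
/- (Impossibility of verifying the underlying TA) Let f be any function assigning to each pair (labelled Markov chain M over Σ, task automaton A over Σ) a language f(M, A) ⊆ Σ*, and suppose f is invariant under observational equivalence of products, i.e. whenever M⊗A and M⊗A' are observationally equivalent one has f(M, A) = f(M, A'). Then there exist a labelled Markov chain M and a task automaton A with f(M, A) ≠ L(A); in other words, no such procedure can always recover the language of the TA underpinning the product Markov chain. -/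
open scoped Classical

/-- Impossibility of verifying the underlying task automaton: if `f` assigns a language
to every pair of a labelled Markov chain (over a two-letter alphabet) and a task
automaton, and `f` is invariant under observational equivalence of the products, then
`f` fails to recover the language of the task automaton on some pair. -/
theorem no_invariant_function_recovers_TA_language
    (f : ∀ (S Q : Type) (iS : Fintype S) (iQ : Fintype Q),
        @LMC S Bool iS → @TA Q Bool iQ → Set (List Bool))
    (hf : ∀ (S Q Q' : Type) (iS : Fintype S) (iQ : Fintype Q) (iQ' : Fintype Q')
        (M : @LMC S Bool iS) (A : @TA Q Bool iQ) (A' : @TA Q' Bool iQ'),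
        @ObsEquiv S Bool Q Q' iS iQ iQ' M A M A' →
        f S Q iS iQ M A = f S Q' iS iQ' M A') :
    ∃ (S Q : Type) (iS : Fintype S) (iQ : Fintype Q)
      (M : @LMC S Bool iS) (A : @TA Q Bool iQ),
      f S Q iS iQ M A ≠ @taLang Q Bool iQ A := by
  by_contra h
  push_neg at h
  set M : LMC Unit Bool := ⟨(), fun _ _ => 1, fun _ _ => zero_le_one, fun _ => by simp, fun _ => true⟩
  set A1 : TA Bool Bool := ⟨true, fun _ _ => true, fun q => q⟩
  set A2 : TA Bool Bool := ⟨true, fun _ a => a, fun q => q⟩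
  have hequiv : ObsEquiv M A1 M A2 := by
    intro n o
    rfl
  have hfe := hf Unit Bool Bool _ _ _ M A1 A2 hequiv
  have h1 := h Unit Bool _ _ M A1
  have h2 := h Unit Bool _ _ M A2
  have : taLang A1 = taLang A2 := by rw [← h1, hfe, h2]
  have hmem : [false] ∈ taLang A1 := by simp [taLang, A1]
  rw [this] at hmem
  simp [taLang, A2] at hmem
end
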